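/- Let D be a nonnegative-integer random variable with probability mass function (p_l), r ≥ 1, x ∈ (0,1], and q_j(p) := P(D_p ≥ j) for the p-thinning. Assuming E[A^D] < ∞ for all A > 1, the identity 2∑_{j=r}^∞ C(j−1,r−1) ∫_x^1 (p−x)^{j−r} p^{−j−2} q_j'(p) dp = r·(x^{−2} − 1)·∑_{l=r}^∞ p_l·C(l,r)·(1−x)^{l−r} holds. -/

import Mathlib

/-!
Expanding `q_j'` as a series over `l`, the left-hand side becomes a double series over `(l, i)`
with nonnegative terms, dominated thanks to the moment assumption; so the sum over `l` can be
moved outside both the integral and the sum over `i`. For fixed `l` the sum over `i` is finite: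
by `C(l-1, k+i) C(k+i, k) = C(l-1, k) C(l-1-k, i)` (with `k = r - 1`) and the binomial theorem
it collapses to `C(l-1, k) (1-x)^(l-1-k) / p³`. Integrating `p⁻³` over `[x, 1]` and
`l C(l-1, k) = (k+1) C(l, k+1)` give the right-hand side.
-/

open Real MeasureTheory intervalIntegral

noncomputable def binomProb (l r : ℕ) (p : ℝ) : ℝ :=
  (l.choose r : ℝ) * p ^ r * (1 - p) ^ (l - r)

/-- `q_j'(p) = ∑_l p_l l β_{l-1,j-1}(p)`. -/
noncomputable def thinTailDeriv (w : ℕ → ℝ) (j : ℕ) (p : ℝ) : ℝ :=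
  ∑' l : ℕ, w l * l * binomProb (l - 1) (j - 1) p

open Set

lemma binomProb_nonneg {p : ℝ} (hp : p ∈ Icc (0 : ℝ) 1) (n j : ℕ) :
    0 ≤ binomProb n j p := by
  have := hp.2
  unfold binomProb
  exact mul_nonneg (mul_nonneg (Nat.cast_nonneg _) (pow_nonneg hp.1 _))
    (pow_nonneg (by linarith) _)

lemma binomProb_le_choose {p : ℝ} (hp : p ∈ Icc (0 : ℝ) 1) (n j : ℕ) :
    binomProb n j p ≤ n.choose j := by
  have := hp.2
  unfold binomProb
  calc (n.choose j : ℝ) * p ^ j * (1 - p) ^ (n - j) ≤ n.choose j * p ^ j :=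
        mul_le_of_le_one_right (mul_nonneg (Nat.cast_nonneg _) (pow_nonneg hp.1 _))
          (pow_le_one₀ (by linarith) (by linarith [hp.1]))
    _ ≤ n.choose j := mul_le_of_le_one_right (by positivity) (pow_le_one₀ hp.1 hp.2)

lemma binomProb_eq_zero_of_lt {n j : ℕ} (h : n < j) (p : ℝ) : binomProb n j p = 0 := by
  simp [binomProb, Nat.choose_eq_zero_of_lt h]

lemma choose_add_mul_choose_add (k m i : ℕ) :
    (k + m).choose (k + i) * (k + i).choose k = (k + m).choose k * m.choose i := by
  simpa using Nat.choose_mul (n := k + m) (k := k + i) (s := k) (by omega)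

lemma sum_choose_mul_binomProb_div_pow (k m : ℕ) (x : ℝ) {p : ℝ} (hp : p ≠ 0) :
    ∑ i ∈ Finset.range (m + 1),
        ((k + i).choose k : ℝ) * ((p - x) ^ i * binomProb (k + m) (k + i) p / p ^ (k + i + 3))
      = (k + m).choose k * (1 - x) ^ m * (1 / p ^ 3) := by
  have hterm : ∀ i ∈ Finset.range (m + 1),
      ((k + i).choose k : ℝ) * ((p - x) ^ i * binomProb (k + m) (k + i) p / p ^ (k + i + 3))
        = (k + m).choose k * (1 / p ^ 3) * ((p - x) ^ i * (1 - p) ^ (m - i) * m.choose i) := by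
    intro i _
    have hc : ((k + m).choose (k + i) : ℝ) * (k + i).choose k
        = (k + m).choose k * m.choose i := by
      exact_mod_cast choose_add_mul_choose_add k m i
    rw [binomProb, show k + m - (k + i) = m - i by omega, pow_add p (k + i) 3]
    field_simp
    linear_combination ((p - x) ^ i * (1 - p) ^ (m - i)) * hc
  rw [Finset.sum_congr rfl hterm, ← Finset.mul_sum, ← add_pow, sub_add_sub_cancel']
  ring

lemma integral_one_div_pow_three {x : ℝ} (hx : 0 < x) :
    ∫ p in x..1, 1 / p ^ 3 = (1 / x ^ 2 - 1) / 2 := by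
  have h := integral_zpow (a := x) (b := 1) (n := -3)
    (Or.inr ⟨by norm_num, notMem_uIcc_of_lt hx one_pos⟩)
  rw [show (fun p : ℝ => 1 / p ^ 3) = fun p => p ^ (-3 : ℤ) by ext; simp [zpow_neg], h]
  norm_num [zpow_neg]
  field_simp
  ring

lemma intervalIntegrable_pow_mul_binomProb_div_pow {x : ℝ} (hx : 0 < x) (i n j : ℕ) :
    IntervalIntegrable (fun p => (p - x) ^ i * binomProb n j p / p ^ (j + 3)) volume x 1 := by
  refine ContinuousOn.intervalIntegrable (ContinuousOn.div ?_ (by fun_prop) fun p hp => ?_)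
  · unfold binomProb; fun_prop
  · exact pow_ne_zero _ (ne_of_mem_of_not_mem hp (notMem_uIcc_of_lt hx one_pos))

lemma pow_mul_binomProb_div_pow_nonneg {x p : ℝ} (hx : 0 ≤ x) (hp : p ∈ Icc x 1)
    (i n j : ℕ) :
    0 ≤ (p - x) ^ i * binomProb n j p / p ^ (j + 3) := by
  have hp0 : 0 ≤ p := hx.trans hp.1
  exact div_nonneg (mul_nonneg (pow_nonneg (sub_nonneg.2 hp.1) _)
    (binomProb_nonneg ⟨hp0, hp.2⟩ _ _)) (pow_nonneg hp0 _)

lemma pow_mul_binomProb_div_pow_le {x p : ℝ} (hx : 0 < x) (hp : p ∈ Icc x 1) (i n j : ℕ) :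
    (p - x) ^ i * binomProb n j p / p ^ (j + 3) ≤ n.choose j / x ^ (j + 3) := by
  have hp01 : p ∈ Icc 0 1 := ⟨hx.le.trans hp.1, hp.2⟩
  have := binomProb_nonneg hp01 n j
  calc (p - x) ^ i * binomProb n j p / p ^ (j + 3) ≤ 1 * n.choose j / x ^ (j + 3) := by
        gcongr
        · exact pow_le_one₀ (sub_nonneg.2 hp.1) (by linarith [hp.2])
        · exact binomProb_le_choose hp01 _ _
        · exact hp.1
    _ = n.choose j / x ^ (j + 3) := by rw [one_mul]

lemma integral_pow_mul_binomProb_div_pow_nonneg {x : ℝ} (hx : x ∈ Ioc 0 1) (i n j : ℕ) :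
    0 ≤ ∫ p in x..1, (p - x) ^ i * binomProb n j p / p ^ (j + 3) :=
  intervalIntegral.integral_nonneg hx.2 fun _ hp =>
    pow_mul_binomProb_div_pow_nonneg hx.1.le hp _ _ _

lemma hasSum_choose_mul_integral_binomProb {x : ℝ} (hx : 0 < x) (k n : ℕ) :
    HasSum (fun i => ((k + i).choose k : ℝ) *
        ∫ p in x..1, (p - x) ^ i * binomProb n (k + i) p / p ^ (k + i + 3))
      (n.choose k * (1 - x) ^ (n - k) * ((1 / x ^ 2 - 1) / 2)) := by
  rcases lt_or_ge n k with hnk | hkn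
  · simp [binomProb_eq_zero_of_lt (lt_of_lt_of_le hnk (Nat.le_add_right _ _)),
      Nat.choose_eq_zero_of_lt hnk]
  obtain ⟨m, rfl⟩ := Nat.exists_eq_add_of_le hkn
  convert hasSum_sum_of_ne_finset_zero (L := .unconditional ℕ) (s := Finset.range (m + 1))
    fun i hi => ?_ using 1
  · rw [Nat.add_sub_cancel_left, ← integral_one_div_pow_three hx,
      ← intervalIntegral.integral_const_mul]
    simp_rw [← intervalIntegral.integral_const_mul]
    rw [← integral_finsetSum fun i _ =>
      (intervalIntegrable_pow_mul_binomProb_div_pow hx _ _ _).const_mul _]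
    refine integral_congr fun p hp => ?_
    exact (sum_choose_mul_binomProb_div_pow k m x
      (ne_of_mem_of_not_mem hp (notMem_uIcc_of_lt hx one_pos))).symm
  · simp [binomProb_eq_zero_of_lt (by simp at hi; omega : k + m < k + i)]

lemma summable_mul_mul_choose {w : ℕ → ℝ} (hw0 : ∀ l, 0 ≤ w l)
    (hw : Summable fun l : ℕ => w l * 4 ^ l) (j : ℕ) :
    Summable fun l : ℕ => w l * l * ((l - 1).choose j : ℝ) := by
  refine hw.of_nonneg_of_le
    (fun l => mul_nonneg (mul_nonneg (hw0 l) l.cast_nonneg) (Nat.cast_nonneg _)) fun l => ?_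
  have hl : (l : ℝ) ≤ 2 ^ l := by exact_mod_cast Nat.lt_two_pow_self.le
  have hc : ((l - 1).choose j : ℝ) ≤ 2 ^ l := by
    exact_mod_cast (Nat.choose_le_two_pow _ _).trans (Nat.pow_le_pow_right two_pos (by omega))
  calc w l * l * ((l - 1).choose j : ℝ) ≤ w l * 2 ^ l * 2 ^ l := by
        have := hw0 l
        gcongr
    _ = w l * 4 ^ l := by rw [mul_assoc, ← mul_pow]; norm_num

lemma integral_mul_thinTailDeriv {w : ℕ → ℝ} (hw0 : ∀ l, 0 ≤ w l) {x : ℝ}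
    (hx : x ∈ Ioc 0 1) (i j : ℕ)
    (hw : Summable fun l : ℕ => w l * l * ((l - 1).choose j : ℝ)) :
    ∫ p in x..1, (p - x) ^ i * thinTailDeriv w (j + 1) p / p ^ (j + 3)
      = ∑' l : ℕ, w l * l *
          ∫ p in x..1, (p - x) ^ i * binomProb (l - 1) j p / p ^ (j + 3) := by
  have hwl : ∀ l : ℕ, 0 ≤ w l * l := fun l => mul_nonneg (hw0 l) l.cast_nonneg
  have hmem : ∀ p ∈ uIoc x 1, p ∈ Icc x 1 := fun p hp =>
    Ioc_subset_Icc_self (uIoc_of_le hx.2 ▸ hp)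
  have hsum : ∀ p ∈ uIoc x 1,
      HasSum (fun l : ℕ => w l * l * ((p - x) ^ i * binomProb (l - 1) j p / p ^ (j + 3)))
        ((p - x) ^ i * thinTailDeriv w (j + 1) p / p ^ (j + 3)) := by
    intro p hp
    have hp01 : p ∈ Icc 0 1 := ⟨hx.1.le.trans (hmem p hp).1, (hmem p hp).2⟩
    have hq : HasSum (fun l : ℕ => w l * l * binomProb (l - 1) j p)
        (thinTailDeriv w (j + 1) p) := by
      rw [thinTailDeriv, Nat.add_sub_cancel]
      exact (hw.of_nonneg_of_le (fun l => mul_nonneg (hwl l) (binomProb_nonneg hp01 _ _))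
        fun l => mul_le_mul_of_nonneg_left (binomProb_le_choose hp01 _ _) (hwl l)).hasSum
    exact ((hq.mul_left ((p - x) ^ i)).div_const (p ^ (j + 3))).congr_fun fun l => by ring
  have hbound : ∀ l : ℕ, ∀ p ∈ uIoc x 1,
      ‖w l * l * ((p - x) ^ i * binomProb (l - 1) j p / p ^ (j + 3))‖
        ≤ w l * l * ((l - 1).choose j : ℝ) / x ^ (j + 3) := by
    intro l p hp
    rw [Real.norm_of_nonneg (mul_nonneg (hwl l)
      (pow_mul_binomProb_div_pow_nonneg hx.1.le (hmem p hp) _ _ _)), mul_div_assoc (w l * l)]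
    exact mul_le_mul_of_nonneg_left
      (pow_mul_binomProb_div_pow_le hx.1 (hmem p hp) _ _ _) (hwl l)
  have h := intervalIntegral.hasSum_integral_of_dominated_convergence (a := x) (b := 1)
    (μ := volume)
    (F := fun (l : ℕ) p => w l * l * ((p - x) ^ i * binomProb (l - 1) j p / p ^ (j + 3)))
    (fun l _ => w l * l * ((l - 1).choose j : ℝ) / x ^ (j + 3))
    (fun l => Measurable.aestronglyMeasurable (by unfold binomProb; fun_prop))
    (fun l => .of_forall (hbound l)) (.of_forall fun _ _ => hw.div_const _)
    intervalIntegrable_const (.of_forall hsum)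
  simpa only [intervalIntegral.integral_const_mul] using h.tsum_eq.symm

lemma tsum_comm_of_nonneg {α β : Type*} {f : α → β → ℝ} (hf : ∀ a b, 0 ≤ f a b)
    (hrow : ∀ a, Summable (f a)) (hsum : Summable fun a => ∑' b, f a b) :
    ∑' b, ∑' a, f a b = ∑' a, ∑' b, f a b :=
  Summable.tsum_comm ((summable_prod_of_nonneg fun q => hf q.1 q.2).2 ⟨hrow, hsum⟩)

lemma tsum_tsum_mul_choose_mul_integral_binomProb {w : ℕ → ℝ} (hw0 : ∀ l, 0 ≤ w l)
    {k : ℕ} (hw : Summable fun l : ℕ => w l * l * ((l - 1).choose k : ℝ))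
    {x : ℝ} (hx : x ∈ Ioc 0 1) :
    ∑' i : ℕ, ∑' l : ℕ, w l * l * (((k + i).choose k : ℝ) *
        ∫ p in x..1, (p - x) ^ i * binomProb (l - 1) (k + i) p / p ^ (k + i + 3))
      = (1 / x ^ 2 - 1) / 2 *
          ∑' l : ℕ, w l * l * ((l - 1).choose k : ℝ) * (1 - x) ^ (l - 1 - k) := by
  have hc : 0 ≤ (1 / x ^ 2 - 1) / 2 := by
    have hx0 := hx.1
    have : 1 ≤ 1 / x ^ 2 := one_le_one_div (by positivity) (pow_le_one₀ hx0.le hx.2)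
    linarith
  set c : ℝ := (1 / x ^ 2 - 1) / 2
  have hterm : ∀ l i, 0 ≤ w l * l * (((k + i).choose k : ℝ) *
      ∫ p in x..1, (p - x) ^ i * binomProb (l - 1) (k + i) p / p ^ (k + i + 3)) :=
    fun l i => mul_nonneg (mul_nonneg (hw0 l) l.cast_nonneg)
      (mul_nonneg (Nat.cast_nonneg _) (integral_pow_mul_binomProb_div_pow_nonneg hx _ _ _))
  have hrow : ∀ l : ℕ, HasSum (fun i => w l * l * (((k + i).choose k : ℝ) *
      ∫ p in x..1, (p - x) ^ i * binomProb (l - 1) (k + i) p / p ^ (k + i + 3)))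
        (w l * l * ((l - 1).choose k * (1 - x) ^ (l - 1 - k) * c)) :=
    fun l => (hasSum_choose_mul_integral_binomProb hx.1 k (l - 1)).mul_left _
  have hrows :
      Summable fun l : ℕ => w l * l * ((l - 1).choose k * (1 - x) ^ (l - 1 - k) * c) := by
    refine (hw.mul_right c).of_nonneg_of_le (fun l => (hrow l).nonneg (hterm l)) fun l => ?_
    have hw0l := hw0 l
    have hpow : (1 - x) ^ (l - 1 - k) ≤ 1 :=
      pow_le_one₀ (by linarith [hx.2]) (by linarith [hx.1])
    calc w l * l * ((l - 1).choose k * (1 - x) ^ (l - 1 - k) * c)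
        = w l * l * (l - 1).choose k * c * (1 - x) ^ (l - 1 - k) := by ring
      _ ≤ w l * l * (l - 1).choose k * c := mul_le_of_le_one_right (by positivity) hpow
  rw [tsum_comm_of_nonneg hterm (fun l => (hrow l).summable)
      (hrows.congr fun l => (hrow l).tsum_eq.symm), tsum_congr fun l => (hrow l).tsum_eq,
    ← tsum_mul_left]
  exact tsum_congr fun l => by ring

lemma tsum_mul_mul_choose_pred (w : ℕ → ℝ) (k : ℕ) (y : ℝ) :
    ∑' l : ℕ, w l * l * ((l - 1).choose k : ℝ) * y ^ (l - 1 - k)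
      = (k + 1) * ∑' i : ℕ, w (k + 1 + i) * ((k + 1 + i).choose (k + 1) : ℝ) * y ^ i := by
  rw [← (add_right_injective (k + 1)).tsum_eq, ← tsum_mul_left]
  · refine tsum_congr fun i => ?_
    have h := Nat.add_one_mul_choose_eq (k + i) k
    rw [show k + i + 1 = k + 1 + i by omega] at h
    have h' : ((k + 1 + i : ℕ) : ℝ) * ((k + i).choose k : ℝ)
        = ((k + 1 + i).choose (k + 1) : ℝ) * (k + 1) := by exact_mod_cast h
    simp only [show k + 1 + i - 1 = k + i by omega, Nat.add_sub_cancel_left]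
    linear_combination (w (k + 1 + i) * y ^ i) * h'
  · intro l hl
    refine ⟨l - (k + 1), Nat.add_sub_cancel' ?_⟩
    by_contra! hlk
    rcases Nat.eq_zero_or_pos l with rfl | hl0
    · simp at hl
    · simp [Nat.choose_eq_zero_of_lt (by omega : l - 1 < k)] at hl

theorem sigma_rW_general_general (w : ℕ → ℝ)
    (hw0 : ∀ l, 0 ≤ w l)
    (hmom : ∀ A : ℝ, 1 < A → Summable fun l : ℕ => w l * A ^ l)
    (r : ℕ) (hr : 1 ≤ r) (x : ℝ) (hx : x ∈ Set.Ioc (0:ℝ) 1) :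
    2 * ∑' i : ℕ, ((r + i - 1).choose (r - 1) : ℝ) *
        ∫ p in x..1, (p - x) ^ i * thinTailDeriv w (r + i) p / p ^ (r + i + 2)
      = (r : ℝ) * (1 / x ^ 2 - 1) *
        ∑' i : ℕ, w (r + i) * ((r + i).choose r : ℝ) * (1 - x) ^ i := by
  obtain ⟨k, rfl⟩ := Nat.exists_eq_add_of_le' hr
  have hw := summable_mul_mul_choose hw0 (hmom 4 (by norm_num))
  have hcol : ∀ i : ℕ, ((k + 1 + i - 1).choose (k + 1 - 1) : ℝ) *
      ∫ p in x..1, (p - x) ^ i * thinTailDeriv w (k + 1 + i) p / p ^ (k + 1 + i + 2)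
        = ∑' l : ℕ, w l * l * (((k + i).choose k : ℝ) *
          ∫ p in x..1, (p - x) ^ i * binomProb (l - 1) (k + i) p / p ^ (k + i + 3)) := by
    intro i
    rw [show k + 1 + i = k + i + 1 by omega, show k + i + 1 + 2 = k + i + 3 by omega,
      integral_mul_thinTailDeriv hw0 hx i (k + i) (hw _), ← tsum_mul_left]
    simp only [Nat.add_sub_cancel]
    exact tsum_congr fun l => by ring
  rw [tsum_congr hcol, tsum_tsum_mul_choose_mul_integral_binomProb hw0 (hw k) hx,
    tsum_mul_mul_choose_pred]
  push_cast
  ring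

/-- Identity (5.56) of the paper. -/
theorem sigma_rW_general (w : ℕ → ℝ)
    (hw0 : ∀ l, 0 ≤ w l) (hw1 : ∑' l, w l = 1)
    (hmom : ∀ A : ℝ, 1 < A → Summable fun l : ℕ => w l * A ^ l)
    (r : ℕ) (hr : 1 ≤ r) (x : ℝ) (hx : x ∈ Set.Ioc (0:ℝ) 1) :
    2 * ∑' i : ℕ, ((r + i - 1).choose (r - 1) : ℝ) *
        ∫ p in x..1, (p - x) ^ i * thinTailDeriv w (r + i) p / p ^ (r + i + 2)
      = (r : ℝ) * (1 / x ^ 2 - 1) *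
        ∑' i : ℕ, w (r + i) * ((r + i).choose r : ℝ) * (1 - x) ^ i :=
  sigma_rW_general_general w hw0 hmom r hr x hx
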